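/- Let A be an integral domain with quotient field K and let f(x) ∈ A[x] be indecomposable in K[x], of degree d ≥ 2 prime to the characteristic of K (i.e., char K = 0 or char K does not divide d). Then there exists a nonzero element I_f ∈ A such that for every field k and every ring homomorphism σ : A → k with σ(I_f) ≠ 0, the polynomial f^σ(x) ∈ k[x], obtained by applying σ to the coefficients of f, is indecomposable in k̄[x] for k̄ an algebraic closure of k. -/

import Mathlib

/-!
Replace `f` by the monic `F = integralNormalization f`, which over a field is decomposable
exactly when `f` is, and work over `R = A[1/d]`. For every factorisation `d = m * e` with
`m, e ≥ 2`, the invertibility of `m` yields an approximate `m`-th root `G` of `F`: a monic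
polynomial of degree `e` with `deg (F - G ^ m) ≤ d - e`. Over a field in which `m ≠ 0`, such a
root is unique up to an additive constant, and the inner component of any decomposition
`F = u ∘ g` with `g` monic of degree `e` is one. Hence `F` decomposes with inner degree `e`
after specialisation only if every `G`-adic digit of `F` specialises to a constant. Since `f` is
indecomposable over the fraction field, some digit has a nonconstant coefficient there, and
`I_f` is the leading coefficient of `f` times `d` times a numerator of the product of these
coefficients.
-/

open Polynomial

/-- A one-variable polynomial over a field is indecomposable if it is non-constant and
cannot be written as `u ∘ g` with both `u` and `g` of degree at least 2. -/
def IndecomposablePoly {K : Type*} [Field K] (f : K[X]) : Prop :=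
  0 < f.natDegree ∧
    ¬ ∃ u g : K[X], 2 ≤ u.natDegree ∧ 2 ≤ g.natDegree ∧ f = u.comp g

namespace Polynomial

def Decomposable {R : Type*} [Semiring R] (p : R[X]) : Prop :=
  ∃ u g : R[X], 2 ≤ u.natDegree ∧ 2 ≤ g.natDegree ∧ p = u.comp g

section Field

variable {K : Type*} [Field K]

theorem Decomposable.C_mul_comp_C_mul_X {p : K[X]} (hp : p.Decomposable) {b c : K}
    (hb : b ≠ 0) (hc : c ≠ 0) : (C c * p.comp (C b * X)).Decomposable := by
  obtain ⟨u, g, hu, hg, rfl⟩ := hp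
  refine ⟨C c * u, g.comp (C b * X), ?_, ?_, ?_⟩
  · rwa [natDegree_C_mul hc]
  · rwa [natDegree_comp, natDegree_C_mul_X _ hb, mul_one]
  · rw [comp_assoc, mul_comp, C_comp]

theorem integralNormalization_eq_C_mul_comp {p : K[X]} (hp : 1 ≤ p.natDegree) :
    p.integralNormalization =
      C (p.leadingCoeff ^ (p.natDegree - 1)) * p.comp (C p.leadingCoeff⁻¹ * X) := by
  have ha : p.leadingCoeff ≠ 0 := leadingCoeff_ne_zero.2 (ne_zero_of_natDegree_gt hp)
  ext i
  have h := integralNormalization_coeff_mul_leadingCoeff_pow i hp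
  rw [coeff_C_mul, comp_C_mul_X_coeff, inv_pow]
  field_simp
  linear_combination h

theorem decomposable_integralNormalization_iff {p : K[X]} (hp : 1 ≤ p.natDegree) :
    p.integralNormalization.Decomposable ↔ p.Decomposable := by
  have ha : p.leadingCoeff ≠ 0 := leadingCoeff_ne_zero.2 (ne_zero_of_natDegree_gt hp)
  have hc : p.leadingCoeff ^ (p.natDegree - 1) ≠ 0 := pow_ne_zero _ ha
  rw [integralNormalization_eq_C_mul_comp hp]
  refine ⟨fun h => ?_, fun h => h.C_mul_comp_C_mul_X (inv_ne_zero ha) hc⟩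
  convert h.C_mul_comp_C_mul_X ha (inv_ne_zero hc) using 1
  rw [mul_comp, C_comp, comp_assoc, mul_comp, C_comp, X_comp, ← mul_assoc, ← C_mul, ← mul_assoc,
    ← C_mul, inv_mul_cancel₀ hc, inv_mul_cancel₀ ha, C_1, one_mul, one_mul, comp_X]

theorem comp_eq_comp_mul_C_leadingCoeff_inv (u : K[X]) {g : K[X]} (hg : g ≠ 0) :
    u.comp g = (u.comp (C g.leadingCoeff * X)).comp (g * C g.leadingCoeff⁻¹) := by
  rw [comp_assoc, mul_comp, C_comp, X_comp, mul_left_comm, ← C_mul,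
    mul_inv_cancel₀ (leadingCoeff_ne_zero.2 hg), C_1, mul_one]

end Field

open Finset

universe v

variable {R : Type*} [CommRing R]

/-- Approximate `m`-th root in the sense of Abhyankar–Moh. -/
def IsApproxRoot (F : R[X]) (m : ℕ) (g : R[X]) : Prop :=
  g.Monic ∧ (F - g ^ m).natDegree ≤ (m - 1) * g.natDegree

theorem Monic.natDegree_pow_mul_pow_sub {g₁ g₂ : R[X]} (h₁ : g₁.Monic) (h₂ : g₂.Monic)
    (he : g₁.natDegree = g₂.natDegree) {m i : ℕ} (hi : i < m) :
    (g₁ ^ i * g₂ ^ (m - 1 - i)).natDegree = (m - 1) * g₁.natDegree := by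
  rw [(h₁.pow i).natDegree_mul (h₂.pow _), h₁.natDegree_pow, h₂.natDegree_pow, ← he, ← add_mul,
    Nat.add_sub_cancel' (by omega)]

theorem natDegree_geom_sum₂_le {g₁ g₂ : R[X]} (h₁ : g₁.Monic) (h₂ : g₂.Monic)
    (he : g₁.natDegree = g₂.natDegree) (m : ℕ) :
    (∑ i ∈ range m, g₁ ^ i * g₂ ^ (m - 1 - i)).natDegree ≤ (m - 1) * g₁.natDegree :=
  natDegree_sum_le_of_forall_le _ _ fun _ hi =>
    (h₁.natDegree_pow_mul_pow_sub h₂ he (mem_range.1 hi)).le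

theorem coeff_geom_sum₂ {g₁ g₂ : R[X]} (h₁ : g₁.Monic) (h₂ : g₂.Monic)
    (he : g₁.natDegree = g₂.natDegree) (m : ℕ) :
    (∑ i ∈ range m, g₁ ^ i * g₂ ^ (m - 1 - i)).coeff ((m - 1) * g₁.natDegree) = m := by
  rw [finsetSum_coeff, sum_congr rfl fun i hi => ?_, sum_const, card_range, nsmul_one]
  rw [← h₁.natDegree_pow_mul_pow_sub h₂ he (mem_range.1 hi)]
  exact ((h₁.pow i).mul (h₂.pow _)).coeff_natDegree

theorem natDegree_pow_sub_pow_le {g₁ g₂ : R[X]} (h₁ : g₁.Monic) (h₂ : g₂.Monic)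
    (he : g₁.natDegree = g₂.natDegree) {k : ℕ} (hk : (g₁ - g₂).natDegree ≤ k) (m : ℕ) :
    (g₁ ^ m - g₂ ^ m).natDegree ≤ (m - 1) * g₁.natDegree + k := by
  rw [← geom_sum₂_mul]
  exact natDegree_mul_le.trans (add_le_add (natDegree_geom_sum₂_le h₁ h₂ he m) hk)

theorem coeff_pow_sub_pow {g₁ g₂ : R[X]} (h₁ : g₁.Monic) (h₂ : g₂.Monic)
    (he : g₁.natDegree = g₂.natDegree) {k : ℕ} (hk : (g₁ - g₂).natDegree ≤ k) (m : ℕ) :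
    (g₁ ^ m - g₂ ^ m).coeff ((m - 1) * g₁.natDegree + k) = m * (g₁ - g₂).coeff k := by
  rw [← geom_sum₂_mul, coeff_mul_add_eq_of_natDegree_le (natDegree_geom_sum₂_le h₁ h₂ he m) hk,
    coeff_geom_sum₂ h₁ h₂ he]

theorem IsApproxRoot.natDegree_sub_eq_zero [IsDomain R] {F g₁ g₂ : R[X]} {m : ℕ}
    (h₁ : IsApproxRoot F m g₁) (h₂ : IsApproxRoot F m g₂) (he : g₁.natDegree = g₂.natDegree)
    (hm : (m : R) ≠ 0) : (g₁ - g₂).natDegree = 0 := by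
  rcases eq_or_ne (g₁ - g₂) 0 with h | h
  · rw [h, natDegree_zero]
  have hcoeff :
      (g₁ ^ m - g₂ ^ m).coeff ((m - 1) * g₁.natDegree + (g₁ - g₂).natDegree) ≠ 0 := by
    rw [coeff_pow_sub_pow h₁.1 h₂.1 he le_rfl]
    exact mul_ne_zero hm (leadingCoeff_ne_zero.2 h)
  have hdeg : (g₁ ^ m - g₂ ^ m).natDegree ≤ (m - 1) * g₁.natDegree := by
    rw [← sub_sub_sub_cancel_left _ _ F]
    exact (natDegree_sub_le _ _).trans (max_le (he ▸ h₂.2) h₁.2)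
  have := (le_natDegree_of_ne_zero hcoeff).trans hdeg
  omega

theorem IsApproxRoot.map {S : Type*} [CommRing S] [Nontrivial S] (φ : R →+* S) {F g : R[X]}
    {m : ℕ} (h : IsApproxRoot F m g) : IsApproxRoot (F.map φ) m (g.map φ) := by
  refine ⟨h.1.map φ, ?_⟩
  rw [h.1.natDegree_map, ← Polynomial.map_pow, ← Polynomial.map_sub]
  exact natDegree_map_le.trans h.2

theorem Monic.natDegree_sub_X_pow_le {p : R[X]} (hp : p.Monic) :
    (p - X ^ p.natDegree).natDegree ≤ p.natDegree - 1 := by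
  rw [← monomial_one_right_eq_X_pow, ← hp.leadingCoeff, self_sub_monomial_natDegree_leadingCoeff]
  exact eraseLead_natDegree_le p

theorem isApproxRoot_of_eq_comp [IsDomain R] {F u g : R[X]} (hF : F.Monic) (hg : g.Monic)
    (hg0 : 0 < g.natDegree) (h : F = u.comp g) : IsApproxRoot F u.natDegree g := by
  have hu : u.Monic := by
    have := leadingCoeff_comp (p := u) hg0.ne'
    rwa [← h, hF.leadingCoeff, hg.leadingCoeff, one_pow, mul_one, eq_comm] at this
  refine ⟨hg, ?_⟩
  rw [h, ← X_pow_comp (p := g), ← sub_comp]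
  exact natDegree_comp_le.trans (Nat.mul_le_mul_right _ hu.natDegree_sub_X_pow_le)

theorem IsApproxRoot.exists_eq_comp [IsDomain R] {F G g u : R[X]} {m : ℕ}
    (hG : IsApproxRoot F m G) (hm : (m : R) ≠ 0) (hF : F.Monic)
    (hFd : F.natDegree = m * G.natDegree) (hg : g.Monic) (hgG : g.natDegree = G.natDegree)
    (hG0 : 0 < G.natDegree) (h : F = u.comp g) : ∃ v : R[X], F = v.comp G := by
  have hu : u.natDegree = m := by
    rw [h, natDegree_comp, hgG] at hFd
    exact Nat.eq_of_mul_eq_mul_right hG0 hFd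
  have hgG' :=
    (hu ▸ isApproxRoot_of_eq_comp hF hg (hgG ▸ hG0) h).natDegree_sub_eq_zero hG hgG hm
  refine ⟨u.comp (X + C ((g - G).coeff 0)), ?_⟩
  rw [comp_assoc, add_comp, X_comp, C_comp, ← eq_C_of_natDegree_eq_zero hgG', add_sub_cancel, h]

/-- One Newton-type correction `g ↦ g + (t / m) X ^ k` kills the coefficient of `F - g ^ m` in
degree `(m - 1) * deg g + k`. -/
theorem exists_monic_natDegree_sub_pow_le_pred [Nontrivial R] {F g : R[X]} {m k : ℕ}
    (hm : IsUnit (m : R)) (hg : g.Monic) (hk : k < g.natDegree)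
    (hF : (F - g ^ m).natDegree ≤ (m - 1) * g.natDegree + k) :
    ∃ g' : R[X], g'.Monic ∧ g'.natDegree = g.natDegree ∧
      (F - g' ^ m).natDegree ≤ (m - 1) * g.natDegree + k - 1 := by
  obtain ⟨w, hw⟩ := hm.exists_right_inv
  set t := (F - g ^ m).coeff ((m - 1) * g.natDegree + k)
  set h : R[X] := C (t * w) * X ^ k
  have hlt : h.degree < g.degree := by
    rw [degree_eq_natDegree hg.ne_zero]
    exact (degree_le_of_natDegree_le (natDegree_C_mul_X_pow_le _ _)).trans_lt
      (by exact_mod_cast hk)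
  have hg' : (g + h).Monic := hg.add_of_left hlt
  have he : (g + h).natDegree = g.natDegree := natDegree_add_eq_left_of_degree_lt hlt
  have hδ : (g + h - g).natDegree ≤ k := by
    rw [add_sub_cancel_left]
    exact natDegree_C_mul_X_pow_le _ _
  refine ⟨g + h, hg', he, natDegree_le_pred ?_ ?_⟩ <;>
    rw [← sub_sub_sub_cancel_right F _ (g ^ m)]
  · refine (natDegree_sub_le _ _).trans (max_le hF ?_)
    simpa only [he] using natDegree_pow_sub_pow_le hg' hg he hδ m
  · rw [coeff_sub, ← he, coeff_pow_sub_pow hg' hg he hδ, he, add_sub_cancel_left,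
      coeff_C_mul_X_pow, if_pos rfl]
    linear_combination (-t) * hw

theorem exists_isApproxRoot [Nontrivial R] {F : R[X]} {m e : ℕ} (hF : F.Monic)
    (hFd : F.natDegree = m * e) (hm : IsUnit (m : R)) :
    ∃ g : R[X], g.natDegree = e ∧ IsApproxRoot F m g := by
  suffices ∀ k ≤ e - 1, ∃ g : R[X], g.Monic ∧ g.natDegree = e ∧
      (F - g ^ m).natDegree ≤ (m - 1) * e + k by
    obtain ⟨g, hg, hge, hFg⟩ := this 0 (Nat.zero_le _)
    exact ⟨g, hge, hg, hge ▸ hFg⟩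
  intro k hk
  refine Nat.decreasingInduction (fun k hk ih => ?_) ?_ hk
  · obtain ⟨g, hg, hge, hFg⟩ := ih
    obtain ⟨g', hg', hge', hFg'⟩ :=
      exists_monic_natDegree_sub_pow_le_pred hm hg (k := k + 1) (by omega) (hge ▸ hFg)
    exact ⟨g', hg', hge'.trans hge, hge ▸ hFg'⟩
  · refine ⟨X ^ e, monic_X_pow e, natDegree_X_pow e, ?_⟩
    rw [← pow_mul, mul_comm, ← hFd]
    have := hF.natDegree_sub_X_pow_le
    rw [Nat.sub_one_mul]
    omega

noncomputable def adicQuotient (g F : R[X]) : ℕ → R[X]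
  | 0 => F
  | i + 1 => adicQuotient g F i /ₘ g

/-- For monic `g`, `F = ∑ i, adicDigit g F i * g ^ i` with every digit of degree `< deg g`. -/
noncomputable def adicDigit (g F : R[X]) (i : ℕ) : R[X] :=
  adicQuotient g F i %ₘ g

theorem adicQuotient_map {S : Type*} [CommRing S] (φ : R →+* S) {g : R[X]} (hg : g.Monic)
    (F : R[X]) (i : ℕ) : (adicQuotient g F i).map φ = adicQuotient (g.map φ) (F.map φ) i := by
  induction i with
  | zero => rfl
  | succ i ih => rw [adicQuotient, adicQuotient, map_divByMonic φ hg, ih]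

theorem adicDigit_map {S : Type*} [CommRing S] (φ : R →+* S) {g : R[X]} (hg : g.Monic)
    (F : R[X]) (i : ℕ) : (adicDigit g F i).map φ = adicDigit (g.map φ) (F.map φ) i := by
  rw [adicDigit, adicDigit, map_modByMonic φ hg, adicQuotient_map φ hg]

theorem comp_divByMonic_and_modByMonic {g : R[X]} (hg : g.Monic) (hg0 : 0 < g.natDegree)
    (u : R[X]) : u.comp g /ₘ g = u.divX.comp g ∧ u.comp g %ₘ g = C (u.coeff 0) := by
  refine div_modByMonic_unique _ _ hg
    ⟨?_, degree_C_le.trans_lt (natDegree_pos_iff_degree_pos.1 hg0)⟩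
  conv_rhs => rw [← X_mul_divX_add u]
  rw [add_comp, mul_comp, X_comp, C_comp, add_comm]

theorem adicQuotient_comp {g : R[X]} (hg : g.Monic) (hg0 : 0 < g.natDegree) (u : R[X])
    (i : ℕ) : adicQuotient g (u.comp g) i = (divX^[i] u).comp g := by
  induction i with
  | zero => rfl
  | succ i ih =>
    rw [adicQuotient, ih, (comp_divByMonic_and_modByMonic hg hg0 _).1,
      Function.iterate_succ_apply']

theorem coeff_zero_iterate_divX (u : R[X]) (i : ℕ) : (divX^[i] u).coeff 0 = u.coeff i := by
  induction i generalizing u with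
  | zero => rfl
  | succ i ih => rw [Function.iterate_succ_apply, ih, coeff_divX]

theorem adicDigit_comp {g : R[X]} (hg : g.Monic) (hg0 : 0 < g.natDegree) (u : R[X]) (i : ℕ) :
    adicDigit g (u.comp g) i = C (u.coeff i) := by
  rw [adicDigit, adicQuotient_comp hg hg0, (comp_divByMonic_and_modByMonic hg hg0 _).2,
    coeff_zero_iterate_divX]

theorem sum_adicDigit_mul_pow_add (g F : R[X]) (n : ℕ) :
    ∑ i ∈ range n, adicDigit g F i * g ^ i + adicQuotient g F n * g ^ n = F := by
  induction n with
  | zero => simp [adicQuotient]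
  | succ n ih =>
    rw [sum_range_succ, adicQuotient, adicDigit]
    conv_rhs => rw [← ih, ← modByMonic_add_div (adicQuotient g F n) g]
    ring

theorem natDegree_adicQuotient_le {g : R[X]} (hg : g.Monic) (F : R[X]) (i : ℕ) :
    (adicQuotient g F i).natDegree ≤ F.natDegree - i * g.natDegree := by
  induction i with
  | zero => rw [adicQuotient, zero_mul, Nat.sub_zero]
  | succ i ih =>
    rw [adicQuotient, natDegree_divByMonic _ hg, Nat.succ_mul]
    omega

theorem adicQuotient_natDegree_add_one_eq_zero [Nontrivial R] {g : R[X]} (hg : g.Monic)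
    (hg0 : 0 < g.natDegree) (F : R[X]) : adicQuotient g F (F.natDegree + 1) = 0 := by
  rw [adicQuotient, divByMonic_eq_zero_iff hg]
  refine (degree_le_of_natDegree_le ((natDegree_adicQuotient_le hg F _).trans ?_)).trans_lt
    (natDegree_pos_iff_degree_pos.1 hg0)
  exact (Nat.sub_eq_zero_of_le (Nat.le_mul_of_pos_right _ hg0)).le

theorem exists_eq_comp_of_forall_natDegree_adicDigit_eq_zero [Nontrivial R] {g F : R[X]}
    (hg : g.Monic) (hg0 : 0 < g.natDegree) (h : ∀ i, (adicDigit g F i).natDegree = 0) :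
    ∃ u : R[X], F = u.comp g := by
  refine ⟨∑ i ∈ range (F.natDegree + 1), C ((adicDigit g F i).coeff 0) * X ^ i, ?_⟩
  conv_lhs => rw [← sum_adicDigit_mul_pow_add g F (F.natDegree + 1),
    adicQuotient_natDegree_add_one_eq_zero hg hg0, zero_mul, add_zero]
  rw [sum_comp]
  refine sum_congr rfl fun i _ => ?_
  rw [mul_comp, C_comp, X_pow_comp, ← eq_C_of_natDegree_eq_zero (h i)]

/-- The obstruction `c` is a coefficient of a nonconstant `G`-adic digit of `F`. -/
theorem exists_ne_zero_apply_eq_zero_of_map_eq_comp {K : Type*} [Field K] (φ : R →+* K)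
    {F G : R[X]} (hG : G.Monic) (hG0 : 0 < G.natDegree)
    (hF : ¬ ∃ u : K[X], F.map φ = u.comp (G.map φ)) :
    ∃ c : R, c ≠ 0 ∧ ∀ {L : Type*} [CommRing L] [Nontrivial L] (ψ : R →+* L),
      (∃ u : L[X], F.map ψ = u.comp (G.map ψ)) → ψ c = 0 := by
  have : Nontrivial R := φ.domain_nontrivial
  obtain ⟨i, hi⟩ : ∃ i, (adicDigit (G.map φ) (F.map φ) i).natDegree ≠ 0 := by
    by_contra! h
    exact hF (exists_eq_comp_of_forall_natDegree_adicDigit_eq_zero (hG.map φ)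
      (hG.natDegree_map φ ▸ hG0) h)
  rw [← adicDigit_map φ hG] at hi
  refine ⟨(adicDigit G F i).coeff ((adicDigit G F i).map φ).natDegree, fun h0 => ?_,
    fun ψ ⟨u, hu⟩ => ?_⟩
  · have hne : (adicDigit G F i).map φ ≠ 0 := fun h => hi (by rw [h, natDegree_zero])
    refine leadingCoeff_ne_zero.2 hne ?_
    rw [leadingCoeff, coeff_map, h0, map_zero]
  · have := congrArg (coeff · ((adicDigit G F i).map φ).natDegree) (adicDigit_map ψ hG F i)
    simp only [coeff_map, hu, adicDigit_comp (hG.map ψ) (hG.natDegree_map ψ ▸ hG0), coeff_C,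
      if_neg hi] at this
    exact this

theorem exists_ne_zero_forall_not_exists_map_eq_comp {K : Type*} [Field K] (φ : R →+* K)
    {F : R[X]} {m e : ℕ} (hF : F.Monic) (hFd : F.natDegree = m * e) (hm : IsUnit (m : R))
    (he : 0 < e) (hφ : ¬ ∃ u g : K[X], g.natDegree = e ∧ F.map φ = u.comp g) :
    ∃ c : R, c ≠ 0 ∧ ∀ {L : Type v} [Field L] (ψ : R →+* L), ψ c ≠ 0 →
      ¬ ∃ u g : L[X], g.natDegree = e ∧ F.map ψ = u.comp g := by
  have : Nontrivial R := φ.domain_nontrivial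
  obtain ⟨G, hGe, hG⟩ := exists_isApproxRoot hF hFd hm
  obtain ⟨c, hc0, hc⟩ := exists_ne_zero_apply_eq_zero_of_map_eq_comp φ hG.1 (hGe ▸ he)
    fun ⟨u, hu⟩ => hφ ⟨u, G.map φ, by rw [hG.1.natDegree_map, hGe], hu⟩
  refine ⟨c, hc0, fun ψ hψ ⟨u, g, hge, hu⟩ => hψ (hc ψ ?_)⟩
  have hg0 : g ≠ 0 := by
    rintro rfl
    rw [natDegree_zero] at hge
    omega
  rw [comp_eq_comp_mul_C_leadingCoeff_inv u hg0] at hu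
  refine (hG.map ψ).exists_eq_comp (by simpa using (hm.map ψ).ne_zero) (hF.map ψ) ?_
    (monic_mul_leadingCoeff_inv hg0) ?_ ?_ hu
  · rw [hF.natDegree_map, hG.1.natDegree_map, hFd, hGe]
  · rw [natDegree_mul_C (inv_ne_zero (leadingCoeff_ne_zero.2 hg0)), hge, hG.1.natDegree_map,
      hGe]
  · rwa [hG.1.natDegree_map, hGe]

theorem exists_ne_zero_forall_not_decomposable_map [IsDomain R] {K : Type*} [Field K]
    (φ : R →+* K) {F : R[X]} (hF : F.Monic) (hd : IsUnit (F.natDegree : R))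
    (hφ : ¬ (F.map φ).Decomposable) :
    ∃ c : R, c ≠ 0 ∧ ∀ {L : Type v} [Field L] (ψ : R →+* L), ψ c ≠ 0 →
      ¬ (F.map ψ).Decomposable := by
  set d := F.natDegree
  set E := d.divisors.filter fun e => 2 ≤ e ∧ 2 ≤ d / e
  have key : ∀ e ∈ E, ∃ c : R, c ≠ 0 ∧ ∀ {L : Type v} [Field L] (ψ : R →+* L), ψ c ≠ 0 →
      ¬ ∃ u g : L[X], g.natDegree = e ∧ F.map ψ = u.comp g := by
    intro e he
    obtain ⟨⟨hed, -⟩, he2, hm2⟩ := by simpa only [E, mem_filter, Nat.mem_divisors] using he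
    refine exists_ne_zero_forall_not_exists_map_eq_comp φ hF (Nat.div_mul_cancel hed).symm
      (isUnit_of_dvd_unit (Nat.cast_dvd_cast (Nat.div_dvd_of_dvd hed)) hd) (by omega) ?_
    rintro ⟨u, g, hge, hu⟩
    have hdu : d = u.natDegree * e :=
      (hF.natDegree_map φ).symm.trans (by rw [hu, natDegree_comp, hge])
    rw [hdu, Nat.mul_div_cancel _ (by omega)] at hm2
    exact hφ ⟨u, g, hm2, hge ▸ he2, hu⟩
  choose c hc0 hc using key
  refine ⟨∏ e ∈ E.attach, c e.1 e.2, prod_ne_zero_iff.2 fun e _ => hc0 e.1 e.2,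
    fun ψ hψ ⟨u, g, hu, hg, hFug⟩ => ?_⟩
  have hdu : d = u.natDegree * g.natDegree :=
    (hF.natDegree_map ψ).symm.trans (by rw [hFug, natDegree_comp])
  have he : g.natDegree ∈ E := by
    simp only [E, mem_filter, Nat.mem_divisors]
    refine ⟨⟨Dvd.intro_left _ hdu.symm, by rw [hdu]; positivity⟩, hg, ?_⟩
    rwa [hdu, Nat.mul_div_cancel _ (by omega)]
  rw [map_prod, prod_ne_zero_iff] at hψ
  exact hc _ he ψ (hψ ⟨_, he⟩ (mem_attach _ _)) ⟨u, g, rfl, hFug⟩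

theorem exists_ne_zero_forall_not_decomposable_map_of_monic {A : Type*} [CommRing A]
    [IsDomain A] {K : Type*} [Field K] (φ : A →+* K) {F : A[X]} (hF : F.Monic)
    (hd : (F.natDegree : K) ≠ 0) (hφ : ¬ (F.map φ).Decomposable) :
    ∃ b : A, b ≠ 0 ∧ ∀ {L : Type v} [Field L] (τ : A →+* L), τ b ≠ 0 →
      ¬ (F.map τ).Decomposable := by
  have hs : (F.natDegree : A) ≠ 0 := fun h => hd (by rw [← map_natCast φ, h, map_zero])
  set s : A := (F.natDegree : A)
  have := Localization.Away.isDomain hs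
  have hφs : IsUnit (φ s) := isUnit_iff_ne_zero.2 (by rwa [map_natCast])
  obtain ⟨c, hc0, hc⟩ := exists_ne_zero_forall_not_decomposable_map
    (IsLocalization.Away.lift (S := Localization.Away s) s hφs) (hF.map (algebraMap A _))
    (by rw [hF.natDegree_map, ← map_natCast (algebraMap A _)]
        exact IsLocalization.Away.algebraMap_isUnit s)
    (by rwa [map_map, IsLocalization.Away.lift_comp])
  obtain ⟨n, b, hb⟩ := IsLocalization.Away.surj s c
  refine ⟨s * b, mul_ne_zero hs ?_, fun τ hτ => ?_⟩
  · rintro rfl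
    rw [map_zero, ((IsLocalization.Away.algebraMap_isUnit s).pow n).mul_left_eq_zero] at hb
    exact hc0 hb
  · rw [map_mul] at hτ
    have hτs : IsUnit (τ s) := isUnit_iff_ne_zero.2 (left_ne_zero_of_mul hτ)
    have := hc (IsLocalization.Away.lift s hτs) fun h => right_ne_zero_of_mul hτ <| by
      rw [← IsLocalization.Away.lift_eq (S := Localization.Away s) s hτs b, ← hb, map_mul, h,
        zero_mul]
    rwa [map_map, IsLocalization.Away.lift_comp] at this

theorem decomposable_map_integralNormalization_iff {A K : Type*} [CommRing A] [Field K]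
    (φ : A →+* K) {f : A[X]} (hφ : φ f.leadingCoeff ≠ 0) (hf : 1 ≤ f.natDegree) :
    (f.integralNormalization.map φ).Decomposable ↔ (f.map φ).Decomposable := by
  rw [← integralNormalization_map φ f hφ, decomposable_integralNormalization_iff
    (by rwa [natDegree_map_of_leadingCoeff_ne_zero φ hφ])]

end Polynomial

theorem natCast_ne_zero_of_ringChar {R : Type*} [NonAssocSemiring R] {d : ℕ} (hd : 0 < d)
    (h : ringChar R = 0 ∨ ¬ ringChar R ∣ d) : (d : R) ≠ 0 := by
  rw [ne_eq, ringChar.spec]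
  rcases h with h | h
  · rw [h, zero_dvd_iff]
    exact hd.ne'
  · exact h

theorem bertini_noether_indecomposable_general (A : Type*) [CommRing A] [IsDomain A]
    (f : Polynomial A) (d : ℕ) (hdeg : f.natDegree = d)
    (hchar : ringChar (FractionRing A) = 0 ∨ ¬ (ringChar (FractionRing A) ∣ d))
    (hf : IndecomposablePoly (f.map (algebraMap A (FractionRing A)))) :
    ∃ I : A, I ≠ 0 ∧
      ∀ (k : Type u) [Field k] (σ : A →+* k), σ I ≠ 0 →
        IndecomposablePoly (f.map ((algebraMap k (AlgebraicClosure k)).comp σ)) := by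
  have hfK : (f.map (algebraMap A (FractionRing A))).natDegree = d := by
    rw [natDegree_map_eq_of_injective (IsFractionRing.injective A _), hdeg]
  have hd0 : 0 < d := hfK ▸ hf.1
  have hf0 : f ≠ 0 := ne_zero_of_natDegree_gt (hdeg ▸ hd0)
  have hlc : f.leadingCoeff ≠ 0 := leadingCoeff_ne_zero.2 hf0
  obtain ⟨b, hb0, hb⟩ := exists_ne_zero_forall_not_decomposable_map_of_monic
    (algebraMap A (FractionRing A)) (monic_integralNormalization hf0)
    (by rw [natDegree_integralNormalization, hdeg]; exact natCast_ne_zero_of_ringChar hd0 hchar)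
    (by rw [decomposable_map_integralNormalization_iff _ (by simpa using hlc) (by omega)]
        exact hf.2)
  refine ⟨f.leadingCoeff * b, mul_ne_zero hlc hb0, fun k _ σ hσ => ?_⟩
  set τ := (algebraMap k (AlgebraicClosure k)).comp σ
  have hτ : τ f.leadingCoeff * τ b ≠ 0 := by simpa [τ] using hσ
  refine ⟨by rwa [natDegree_map_of_leadingCoeff_ne_zero τ (left_ne_zero_of_mul hτ), hdeg],
    fun hdec => hb τ (right_ne_zero_of_mul hτ) ?_⟩
  rwa [decomposable_map_integralNormalization_iff τ (left_ne_zero_of_mul hτ) (by omega)]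

/-- **Proposition (Bertini–Noether for indecomposability).** Let `A` be an integral domain with
quotient field `K`, and let `f ∈ A[x]` be indecomposable in `K[x]` of degree `d ≥ 2` prime to
the characteristic of `K`. Then there is a nonzero `I_f ∈ A` such that for every field `k` and
ring morphism `σ : A → k` with `σ(I_f) ≠ 0`, the polynomial `f^σ` is indecomposable in
`k̄[x]`. -/
theorem bertini_noether_indecomposable (A : Type*) [CommRing A] [IsDomain A]
    (f : Polynomial A) (d : ℕ) (hdeg : f.natDegree = d) (hd : 2 ≤ d)
    (hchar : ringChar (FractionRing A) = 0 ∨ ¬ (ringChar (FractionRing A) ∣ d))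
    (hf : IndecomposablePoly (f.map (algebraMap A (FractionRing A)))) :
    ∃ I : A, I ≠ 0 ∧
      ∀ (k : Type u) [Field k] (σ : A →+* k), σ I ≠ 0 →
        IndecomposablePoly (f.map ((algebraMap k (AlgebraicClosure k)).comp σ)) :=
  bertini_noether_indecomposable_general A f d hdeg hchar hf
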